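/- arXiv:1309.3349 — 2 statements merged into one kernel-verified Lean document; each statement's English description precedes it below -/
import Mathlib

section
/- Let C be a finite EI category, k a field, and S a simple kC-module, regarded as a functor C → Vect_k. Then there is exactly one isomorphism class [x] of objects of C such that S(x) ≠ 0, and for any such x, S(x) is a simple module over the automorphism group Aut_C(x). -/
/-!
A family of submodules of the values of `S` that is stable under all maps `S.map f` is the value
of a subfunctor of `S`, so by simplicity it is either zero everywhere or everything everywhere.
Applied to the subfunctor generated by `S(x)`, this gives a morphism `x ⟶ y` whenever `S(x)` and
`S(y)` are nonzero; in an EI category, morphisms in both directions are isomorphisms. Applied to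
the subfunctor generated by an `Aut(x)`-stable subspace `p` of `S(x)`, whose value at `x` is `p`
because every endomorphism of `x` is an automorphism, it gives the simplicity of `S(x)`.
-/

open CategoryTheory

namespace CategoryTheory

universe u v w

theorem isIso_of_isIso_comp_of_isIso_comp {C : Type*} [Category C] {x y : C}
    (f : x ⟶ y) (g : y ⟶ x) [IsIso (f ≫ g)] [IsIso (g ≫ f)] : IsIso f :=
  have : IsSplitMono f := .mk' ⟨g ≫ inv (f ≫ g), by rw [← Category.assoc, IsIso.hom_inv_id]⟩
  have : Epi f := epi_of_epi g f
  isIso_of_epi_of_isSplitMono f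

variable {R : Type u} [Ring R] {C : Type w} [Category C]

variable (S : C ⥤ ModuleCat.{v} R) in
structure SubmoduleFunctor where
  obj (y : C) : Submodule R (S.obj y)
  map {y z : C} (f : y ⟶ z) : obj y ≤ (obj z).comap (S.map f).hom

namespace SubmoduleFunctor

variable {S : C ⥤ ModuleCat.{v} R} (P : SubmoduleFunctor S)

def toFunctor : C ⥤ ModuleCat.{v} R where
  obj y := ModuleCat.of R (P.obj y)
  map f := ModuleCat.ofHom ((S.map f).hom.restrict (P.map f))
  map_id y := by ext v; exact congr($(S.map_id y) v.1)
  map_comp f g := by ext v; exact congr($(S.map_comp f g) v.1)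

def ι : P.toFunctor ⟶ S where
  app y := ModuleCat.ofHom (P.obj y).subtype

instance : Mono P.ι :=
  have (y : C) : Mono (P.ι.app y) :=
    (ModuleCat.mono_iff_injective _).2 Subtype.val_injective
  NatTrans.mono_of_mono_app _

theorem obj_eq_top_of_ne_bot [Simple S] {x : C} (hx : P.obj x ≠ ⊥) (y : C) : P.obj y = ⊤ := by
  obtain ⟨v, hv, hv0⟩ := Submodule.exists_mem_ne_zero_of_ne_bot hx
  have hι : P.ι ≠ 0 := fun h => hv0 congr($(h).app x ⟨v, hv⟩)
  have : IsIso P.ι := isIso_of_mono_of_nonzero hι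
  have hsurj : Function.Surjective (P.ι.app y) :=
    (ModuleCat.epi_iff_surjective _).1 inferInstance
  refine Submodule.eq_top_iff'.2 fun w => ?_
  obtain ⟨w', rfl⟩ := hsurj w
  exact w'.2

def span (S : C ⥤ ModuleCat.{v} R) (x : C) (p : Submodule R (S.obj x)) : SubmoduleFunctor S where
  obj y := ⨆ f : x ⟶ y, p.map (S.map f).hom
  map g := by
    rw [← Submodule.map_le_iff_le_comap, Submodule.map_iSup]
    refine iSup_le fun f => le_iSup_of_le (f ≫ g) ?_
    rw [← Submodule.map_comp, S.map_comp]
    rfl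

theorem le_span_obj (x : C) (p : Submodule R (S.obj x)) : p ≤ (span S x p).obj x :=
  le_iSup_of_le (𝟙 x) (by simp)

theorem span_obj_le (x : C) (p : Submodule R (S.obj x))
    (hp : ∀ f : x ⟶ x, p ≤ p.comap (S.map f).hom) : (span S x p).obj x ≤ p :=
  iSup_le fun f => Submodule.map_le_iff_le_comap.2 (hp f)

theorem span_obj_eq_bot (x y : C) [IsEmpty (x ⟶ y)] (p : Submodule R (S.obj x)) :
    (span S x p).obj y = ⊥ :=
  iSup_of_empty _

end SubmoduleFunctor

open SubmoduleFunctor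

variable (S : C ⥤ ModuleCat.{v} R) [Simple S]

theorem exists_nontrivial_obj_of_simple : ∃ x : C, Nontrivial (S.obj x) := by
  by_contra! h
  exact Simple.not_isZero S (Functor.isZero S fun x => ModuleCat.isZero_of_subsingleton _)

theorem nonempty_hom_of_simple (x y : C) [Nontrivial (S.obj x)] [Nontrivial (S.obj y)] :
    Nonempty (x ⟶ y) := by
  by_contra! h
  have hx : (span S x ⊤).obj x ≠ ⊥ := ne_bot_of_le_ne_bot top_ne_bot (le_span_obj x ⊤)
  exact bot_ne_top ((span_obj_eq_bot x y ⊤).symm.trans (obj_eq_top_of_ne_bot _ hx y))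

variable {S} in
theorem eq_bot_or_eq_top_of_simple {x : C} (p : Submodule R (S.obj x))
    (hp : ∀ f : x ⟶ x, p ≤ p.comap (S.map f).hom) : p = ⊥ ∨ p = ⊤ := by
  have hspan : (span S x p).obj x = p := (span_obj_le x p hp).antisymm (le_span_obj x p)
  refine or_iff_not_imp_left.2 fun hne => ?_
  rw [← hspan] at hne ⊢
  exact obj_eq_top_of_ne_bot _ hne x

end CategoryTheory

theorem simple_module_concentrated_on_one_iso_class
    (k : Type) [Field k] (C : Type) [SmallCategory C] [Fintype C]
    [∀ x y : C, Fintype (x ⟶ y)]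
    (hEI : ∀ (x : C) (f : x ⟶ x), IsIso f)
    (S : C ⥤ ModuleCat k) (hS : Simple S) :
    ∃ x : C,
      -- `S(x) ≠ 0`
      Nontrivial (S.obj x) ∧
      -- uniqueness of the isomorphism class `[x]`: any object with nonzero value
      -- is isomorphic to `x`
      (∀ y : C, Nontrivial (S.obj y) → Nonempty (y ≅ x)) ∧
      -- `S(x)` is a simple `k Aut_C(x)`-module: every `Aut_C(x)`-invariant
      -- subspace is `⊥` or `⊤`
      (∀ p : Submodule k (S.obj x),
        (∀ (g : Aut x) (v : S.obj x), v ∈ p → S.map g.hom v ∈ p) → p = ⊥ ∨ p = ⊤) := by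
  obtain ⟨x, hx⟩ := exists_nontrivial_obj_of_simple S
  refine ⟨x, hx, fun y hy => ?_, fun p hp => ?_⟩
  · obtain ⟨f⟩ := nonempty_hom_of_simple S y x
    obtain ⟨g⟩ := nonempty_hom_of_simple S x y
    have := hEI y (f ≫ g)
    have := hEI x (g ≫ f)
    have := isIso_of_isIso_comp_of_isIso_comp f g
    exact ⟨asIso f⟩
  · have := hEI x
    exact eq_bot_or_eq_top_of_simple p fun f v hv => hp (asIso f) v hv
end

section
/- Let C be a finite EI category and k a field. If a bounded complex ℂ of kC-modules satisfies ℂ^{⊗̂ n} ≅ 0 in the bounded derived category D^b(kC-mod) for some n ≥ 1, then ℂ ≅ 0 in D^b(kC-mod). In other words, the tensor triangulated category D^b(kC-mod) has no nonzero nilpotent objects. -/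
/-!
STATEMENT 7: Let `C` be a finite EI category and `k` a field.  If a bounded
complex `ℂ` of `kC`-modules satisfies `ℂ^{⊗̂ n} ≅ 0` in `D^b(kC-mod)` for some
`n ≥ 1`, then `ℂ ≅ 0` in `D^b(kC-mod)`: the tensor triangulated category
`D^b(kC-mod)` has no nonzero nilpotent objects.  (A bounded complex is `≅ 0` in
the derived category iff it is acyclic.)
-/

open CategoryTheory MonoidalCategory Limits

variable (k : Type) [Field k] (C : Type) [SmallCategory C] [Fintype C]
  [∀ x y : C, Fintype (x ⟶ y)]

-- standard facts making `CochainComplex (C ⥤ ModuleCat k) ℤ` a monoidal category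
-- (pointwise tensor product of functors, totalized over the complex grading)
variable [(curriedTensor (C ⥤ ModuleCat k)).Additive]
  [∀ X : C ⥤ ModuleCat k, ((curriedTensor (C ⥤ ModuleCat k)).obj X).Additive]
  [∀ X : C ⥤ ModuleCat k,
    PreservesColimit (Functor.empty.{0} (C ⥤ ModuleCat k)) ((curriedTensor (C ⥤ ModuleCat k)).obj X)]
  [∀ X : C ⥤ ModuleCat k,
    PreservesColimit (Functor.empty.{0} (C ⥤ ModuleCat k)) ((curriedTensor (C ⥤ ModuleCat k)).flip.obj X)]
  [∀ X₁ X₂ X₃ X₄ : GradedObject ℤ (C ⥤ ModuleCat k), GradedObject.HasTensor₄ObjExt X₁ X₂ X₃ X₄]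
  [∀ X₁ X₂ X₃ : GradedObject ℤ (C ⥤ ModuleCat k), GradedObject.HasGoodTensor₁₂Tensor X₁ X₂ X₃]
  [∀ X₁ X₂ X₃ : GradedObject ℤ (C ⥤ ModuleCat k), GradedObject.HasGoodTensorTensor₂₃ X₁ X₂ X₃]

/-- `n`-th tensor power of a complex of `kC`-modules (with `K^{⊗ 0}` the unit). -/
noncomputable def tensorPow (K : CochainComplex (C ⥤ ModuleCat k) ℤ) :
    ℕ → CochainComplex (C ⥤ ModuleCat k) ℤ
  | 0 => 𝟙_ (CochainComplex (C ⥤ ModuleCat k) ℤ)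
  | n + 1 => tensorObj (tensorPow K n) K

/-!
Over a field, a complex `M` of functors `C ⥤ ModuleCat k` fails to be exact in degree `i` exactly
when, at some object `x`, there are a cycle `u ∈ Mⁱ(x)` and a functional `φ` on `Mⁱ(x)` that
kills the boundaries and has `φ u = 1`. Such witnesses multiply under the pointwise tensor product: `u ⊗ v` is a cycle of the
total complex at `x`, and `φ ⊗ ψ`, extended by zero to the other summands, kills its boundaries
and takes the value `1` on `u ⊗ v` (the part of the Künneth formula that is needed). Hence a
witness for `ℂ` in degree `i` gives one for `ℂ^{⊗ n}` in degree `n • i`, starting from the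
obvious witness `1 ∈ k` for the unit in degree `0`.

A functional on the total complex at `x` is produced as a morphism into the functor
`y ↦ ((y ⟶ x) → k)`, which corepresents `M ↦ (M.obj x)^*`; this lets the universal property of
the coproducts of the total complex be used in the functor category.
-/

universe u v

namespace CategoryTheory.ShortComplex

lemma exact_iff_forall_exact_map_evaluation {D A : Type*} [Category* D] [Category* A] [Abelian A]
    (S : ShortComplex (D ⥤ A)) : S.Exact ↔ ∀ x, (S.map ((evaluation D A).obj x)).Exact := by
  simp only [exact_iff_isZero_homology, Functor.isZero_iff]
  exact forall_congr' fun x => (S.mapHomologyIso ((evaluation D A).obj x)).symm.isZero_iff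

end CategoryTheory.ShortComplex

namespace FunctorModuleComplex

open HomologicalComplex

section Coinduced

variable {R : Type u} [CommRing R] {D : Type v} [Category.{u} D]

def coinduced (x : D) : D ⥤ ModuleCat.{u} R where
  obj y := ModuleCat.of R ((y ⟶ x) → R)
  map g := ModuleCat.ofHom (LinearMap.funLeft R R (g ≫ ·))
  map_id y := by ext; simp
  map_comp g g' := by ext; simp

variable {x : D} {M N : D ⥤ ModuleCat.{u} R}

def coinducedLift (α : M.obj x →ₗ[R] R) : M ⟶ coinduced x where
  app y := ModuleCat.ofHom (LinearMap.pi fun h => α ∘ₗ (M.map h).hom)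
  naturality y y' g := by
    ext m
    funext h
    change α (M.map h (M.map g m)) = α (M.map (g ≫ h) m)
    rw [M.map_comp, ModuleCat.comp_apply]

lemma coinducedLift_app_apply (α : M.obj x →ₗ[R] R) {y : D} (m : M.obj y) (h : y ⟶ x) :
    (coinducedLift α).app y m h = α (M.map h m) := rfl

def dualOfCoinduced (f : M ⟶ coinduced x) : M.obj x →ₗ[R] R :=
  LinearMap.proj (φ := fun _ : x ⟶ x => R) (𝟙 x) ∘ₗ (f.app x).hom

lemma dualOfCoinduced_apply (f : M ⟶ coinduced x) (m : M.obj x) :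
    dualOfCoinduced f m = f.app x m (𝟙 x) := rfl

@[simp]
lemma dualOfCoinduced_coinducedLift (α : M.obj x →ₗ[R] R) :
    dualOfCoinduced (coinducedLift α) = α := by
  ext m
  rw [dualOfCoinduced_apply, coinducedLift_app_apply, M.map_id, ModuleCat.id_apply]

lemma dualOfCoinduced_comp (g : N ⟶ M) (f : M ⟶ coinduced x) :
    dualOfCoinduced (g ≫ f) = dualOfCoinduced f ∘ₗ (g.app x).hom := rfl

@[simp]
lemma dualOfCoinduced_zero : dualOfCoinduced (0 : M ⟶ coinduced x) = 0 := rfl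

lemma comp_coinducedLift (g : N ⟶ M) (α : M.obj x →ₗ[R] R) :
    g ≫ coinducedLift α = coinducedLift (α ∘ₗ (g.app x).hom) := by
  ext y n
  funext h
  change α (M.map h (g.app y n)) = α (g.app x (N.map h n))
  rw [NatTrans.naturality_apply]

@[simp]
lemma coinducedLift_zero : coinducedLift (0 : M.obj x →ₗ[R] R) = 0 := rfl

end Coinduced

section Bifunctor

variable {C₁ C₂ E : Type*} [Category* C₁] [Category* C₂] [Category* E]
  [HasZeroMorphisms C₁] [HasZeroMorphisms C₂] [Preadditive E]
  {I₁ I₂ J : Type*} {c₁ : ComplexShape I₁} {c₂ : ComplexShape I₂}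
  {K₁ : HomologicalComplex C₁ c₁} {K₂ : HomologicalComplex C₂ c₂}
  {F : C₁ ⥤ C₂ ⥤ E} [F.PreservesZeroMorphisms] [∀ X₁, (F.obj X₁).PreservesZeroMorphisms]
  {c : ComplexShape J} [TotalComplexShape c₁ c₂ c] [HasMapBifunctor K₁ K₂ F c] [DecidableEq J]
  {A : E} (f : ∀ i₁ i₂, (F.obj (K₁.X i₁)).obj (K₂.X i₂) ⟶ A)

lemma comp_ιMapBifunctorOrZero_comp_desc_eq_zero {X : E} {i₁ : I₁} {i₂ : I₂} {j : J}
    (g : X ⟶ (F.obj (K₁.X i₁)).obj (K₂.X i₂)) (hg : g ≫ f i₁ i₂ = 0) :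
    (g ≫ ιMapBifunctorOrZero K₁ K₂ F c i₁ i₂ j) ≫ mapBifunctorDesc (fun i₁ i₂ _ => f i₁ i₂) =
      0 := by
  by_cases h : ComplexShape.π c₁ c₂ c (i₁, i₂) = j
  · rw [ιMapBifunctorOrZero_eq _ _ _ _ _ _ _ h, Category.assoc, ι_mapBifunctorDesc, hg]
  · rw [ιMapBifunctorOrZero_eq_zero _ _ _ _ _ _ _ h, comp_zero, zero_comp]

lemma d₁_comp_desc_eq_zero (h₁ : ∀ i₁ i₁' i₂, (F.map (K₁.d i₁ i₁')).app (K₂.X i₂) ≫ f i₁' i₂ = 0)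
    (i₁ : I₁) (i₂ : I₂) (j : J) :
    mapBifunctor.d₁ K₁ K₂ F c i₁ i₂ j ≫ mapBifunctorDesc (fun i₁ i₂ _ => f i₁ i₂) = 0 := by
  by_cases hr : c₁.Rel i₁ (c₁.next i₁)
  · rw [mapBifunctor.d₁_eq' _ _ _ _ hr, Units.smul_def, Preadditive.zsmul_comp,
      comp_ιMapBifunctorOrZero_comp_desc_eq_zero f _ (h₁ _ _ _), smul_zero]
  · rw [mapBifunctor.d₁_eq_zero _ _ _ _ _ _ _ hr, zero_comp]

lemma d₂_comp_desc_eq_zero (h₂ : ∀ i₁ i₂ i₂', (F.obj (K₁.X i₁)).map (K₂.d i₂ i₂') ≫ f i₁ i₂' = 0)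
    (i₁ : I₁) (i₂ : I₂) (j : J) :
    mapBifunctor.d₂ K₁ K₂ F c i₁ i₂ j ≫ mapBifunctorDesc (fun i₁ i₂ _ => f i₁ i₂) = 0 := by
  by_cases hr : c₂.Rel i₂ (c₂.next i₂)
  · rw [mapBifunctor.d₂_eq' _ _ _ _ _ hr, Units.smul_def, Preadditive.zsmul_comp,
      comp_ιMapBifunctorOrZero_comp_desc_eq_zero f _ (h₂ _ _ _), smul_zero]
  · rw [mapBifunctor.d₂_eq_zero _ _ _ _ _ _ _ hr, zero_comp]

lemma mapBifunctor_d_comp_desc_eq_zero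
    (h₁ : ∀ i₁ i₁' i₂, (F.map (K₁.d i₁ i₁')).app (K₂.X i₂) ≫ f i₁' i₂ = 0)
    (h₂ : ∀ i₁ i₂ i₂', (F.obj (K₁.X i₁)).map (K₂.d i₂ i₂') ≫ f i₁ i₂' = 0) (j j' : J) :
    (mapBifunctor K₁ K₂ F c).d j j' ≫ mapBifunctorDesc (fun i₁ i₂ _ => f i₁ i₂) = 0 := by
  refine mapBifunctor.hom_ext fun i₁ i₂ h => ?_
  rw [mapBifunctor.d_eq, Preadditive.add_comp, Preadditive.comp_add, mapBifunctor.ι_D₁_assoc,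
    mapBifunctor.ι_D₂_assoc, d₁_comp_desc_eq_zero f h₁, d₂_comp_desc_eq_zero f h₂, add_zero,
    comp_zero]

end Bifunctor

section Elements

variable {R : Type u} [CommRing R] {D : Type v} [Category.{u} D]
  {C₁ C₂ : Type*} [Category* C₁] [Category* C₂] [HasZeroMorphisms C₁] [HasZeroMorphisms C₂]
  {I₁ I₂ J : Type*} {c₁ : ComplexShape I₁} {c₂ : ComplexShape I₂}
  {K₁ : HomologicalComplex C₁ c₁} {K₂ : HomologicalComplex C₂ c₂}
  {F : C₁ ⥤ C₂ ⥤ D ⥤ ModuleCat.{u} R} [F.PreservesZeroMorphisms]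
  [∀ X₁, (F.obj X₁).PreservesZeroMorphisms]
  {c : ComplexShape J} [TotalComplexShape c₁ c₂ c] [HasMapBifunctor K₁ K₂ F c] [DecidableEq J]
  {x : D} {i₁ : I₁} {i₂ : I₂} (t : ((F.obj (K₁.X i₁)).obj (K₂.X i₂)).obj x)

lemma d₁_app_eq_zero (ht : ∀ i₁', ((F.map (K₁.d i₁ i₁')).app (K₂.X i₂)).app x t = 0) (j : J) :
    (mapBifunctor.d₁ K₁ K₂ F c i₁ i₂ j).app x t = 0 := by
  by_cases hr : c₁.Rel i₁ (c₁.next i₁)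
  · simp [mapBifunctor.d₁_eq' _ _ _ _ hr, Units.smul_def, ht]
  · simp [mapBifunctor.d₁_eq_zero _ _ _ _ _ _ _ hr]

lemma d₂_app_eq_zero (ht : ∀ i₂', ((F.obj (K₁.X i₁)).map (K₂.d i₂ i₂')).app x t = 0) (j : J) :
    (mapBifunctor.d₂ K₁ K₂ F c i₁ i₂ j).app x t = 0 := by
  by_cases hr : c₂.Rel i₂ (c₂.next i₂)
  · simp [mapBifunctor.d₂_eq' _ _ _ _ _ hr, Units.smul_def, ht]
  · simp [mapBifunctor.d₂_eq_zero _ _ _ _ _ _ _ hr]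

lemma mapBifunctor_d_app_ι_app_eq_zero
    (ht₁ : ∀ i₁', ((F.map (K₁.d i₁ i₁')).app (K₂.X i₂)).app x t = 0)
    (ht₂ : ∀ i₂', ((F.obj (K₁.X i₁)).map (K₂.d i₂ i₂')).app x t = 0)
    {j : J} (h : ComplexShape.π c₁ c₂ c (i₁, i₂) = j) (j' : J) :
    ((mapBifunctor K₁ K₂ F c).d j j').app x ((ιMapBifunctor K₁ K₂ F c i₁ i₂ j h).app x t) = 0 := by
  rw [← ConcreteCategory.comp_apply, ← NatTrans.comp_app, mapBifunctor.d_eq, Preadditive.comp_add,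
    mapBifunctor.ι_D₁, mapBifunctor.ι_D₂, NatTrans.app_add]
  simp [d₁_app_eq_zero t ht₁, d₂_app_eq_zero t ht₂]

end Elements

section Witness

variable {R : Type u} [CommRing R] {D : Type v} [Category.{u} D] {I : Type*} {c : ComplexShape I}

structure HomologyWitness (M : HomologicalComplex (D ⥤ ModuleCat.{u} R) c) (x : D) (i : I) where
  cycle : (M.X i).obj x
  dual : (M.X i).obj x →ₗ[R] R
  d_cycle (j : I) : (M.d i j).app x cycle = 0
  dual_comp_d (j : I) : dual ∘ₗ ((M.d j i).app x).hom = 0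
  dual_cycle : dual cycle = 1

variable {M : HomologicalComplex (D ⥤ ModuleCat.{u} R) c} {x : D} {i : I}

lemma HomologyWitness.not_exactAt [Nontrivial R] (w : HomologyWitness M x i) : ¬ M.ExactAt i := by
  intro hM
  obtain ⟨v, hv⟩ := (ShortComplex.moduleCat_exact_iff _).1
    ((ShortComplex.exact_iff_forall_exact_map_evaluation _).1 hM x) w.cycle (w.d_cycle _)
  have h0 : w.dual ((M.d (c.prev i) i).app x v) = 0 := LinearMap.congr_fun (w.dual_comp_d _) v
  rw [show (M.d (c.prev i) i).app x v = w.cycle from hv, w.dual_cycle] at h0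
  exact one_ne_zero h0

section DecidableEq

variable [DecidableEq I]

noncomputable def HomologyWitness.single (A : D ⥤ ModuleCat.{u} R) (a : A.obj x)
    (φ : A.obj x →ₗ[R] R) (hφ : φ a = 1) :
    HomologyWitness ((HomologicalComplex.single _ c i).obj A) x i where
  cycle := (singleObjXSelf c i A).inv.app x a
  dual := φ ∘ₗ ((singleObjXSelf c i A).hom.app x).hom
  d_cycle j := by simp
  dual_comp_d j := by ext; simp
  dual_cycle := by simp [hφ]

noncomputable def HomologyWitness.dualFamily (w : HomologyWitness M x i) (a : I) :
    (M.X a).obj x →ₗ[R] R :=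
  if h : a = i then w.dual ∘ₗ ((M.XIsoOfEq h).hom.app x).hom else 0

lemma HomologyWitness.dualFamily_self (w : HomologyWitness M x i) : w.dualFamily i = w.dual := by
  ext; simp [dualFamily]

lemma HomologyWitness.dualFamily_comp_d (w : HomologyWitness M x i) (a b : I) :
    w.dualFamily b ∘ₗ ((M.d a b).app x).hom = 0 := by
  by_cases h : b = i
  · subst h
    rw [dualFamily_self, w.dual_comp_d]
  · simp [dualFamily, h]

end DecidableEq

end Witness

lemma exists_homologyWitness_of_not_exactAt {R : Type u} [Field R] {D : Type v} [Category.{u} D]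
    {I : Type*} {c : ComplexShape I} {M : HomologicalComplex (D ⥤ ModuleCat.{u} R) c} {i : I}
    (hM : ¬ M.ExactAt i) :
    ∃ x, Nonempty (HomologyWitness M x i) := by
  rw [exactAt_iff, ShortComplex.exact_iff_forall_exact_map_evaluation] at hM
  push Not at hM
  obtain ⟨x, hx⟩ := hM
  rw [ShortComplex.moduleCat_exact_iff] at hx
  push Not at hx
  obtain ⟨u, hu, hu_range⟩ := hx
  obtain ⟨f, hfu, hf⟩ := Submodule.exists_dual_map_eq_bot_of_notMem
    (p := LinearMap.range ((M.d (c.prev i) i).app x).hom) (x := u)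
    (by rintro ⟨v, rfl⟩; exact hu_range v rfl) inferInstance
  refine ⟨x, ⟨u, (f u)⁻¹ • f, fun j => ?_, fun j => ?_, inv_mul_cancel₀ hfu⟩⟩
  · by_cases hij : c.Rel i j
    · rwa [← c.next_eq' hij]
    · rw [M.shape i j hij]
      rfl
  · by_cases hji : c.Rel j i
    · obtain rfl := c.prev_eq' hji
      ext v
      have : f ((M.d (c.prev i) i).app x v) = 0 :=
        (Submodule.mem_bot R).1 (hf ▸ Submodule.mem_map_of_mem ⟨v, rfl⟩)
      simp [this]
    · simp [M.shape j i hji]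

section PointwiseTensor

variable {R : Type u} [CommRing R] {D : Type v} [Category.{u} D] {x : D}
  {X X' : D ⥤ ModuleCat.{u} R} (f : X ⟶ X') (Y : D ⥤ ModuleCat.{u} R)

lemma curriedTensor_map_app_app_hom :
    ((((curriedTensor _).map f).app Y).app x).hom = (f.app x).hom.rTensor (Y.obj x) := rfl

lemma curriedTensor_obj_map_app_hom :
    ((((curriedTensor _).obj Y).map f).app x).hom = (f.app x).hom.lTensor (Y.obj x) := rfl

end PointwiseTensor

section Tensor

variable {R : Type u} [CommRing R] {D : Type v} [Category.{u} D] {I : Type*} [DecidableEq I]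
  {c : ComplexShape I} {K L : HomologicalComplex (D ⥤ ModuleCat.{u} R) c} {x : D} {p q : I}

noncomputable def HomologyWitness.productDual (wK : HomologyWitness K x p)
    (wL : HomologyWitness L x q) (a b : I) : K.X a ⊗ L.X b ⟶ coinduced x :=
  coinducedLift (LinearMap.mul' R R ∘ₗ TensorProduct.map (wK.dualFamily a) (wL.dualFamily b))

variable (wK : HomologyWitness K x p) (wL : HomologyWitness L x q)

lemma HomologyWitness.whiskerRight_d_comp_productDual (a a' b : I) :
    ((curriedTensor _).map (K.d a a')).app (L.X b) ≫ wK.productDual wL a' b = 0 := by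
  have key : (LinearMap.mul' R R ∘ₗ TensorProduct.map (wK.dualFamily a') (wL.dualFamily b)) ∘ₗ
      ((K.d a a').app x).hom.rTensor ((L.X b).obj x) = 0 := by
    rw [LinearMap.comp_assoc, LinearMap.map_comp_rTensor, wK.dualFamily_comp_d,
      TensorProduct.map_zero_left, LinearMap.comp_zero]
  rw [productDual, comp_coinducedLift, curriedTensor_map_app_app_hom]
  exact (congrArg coinducedLift key).trans coinducedLift_zero

lemma HomologyWitness.whiskerLeft_d_comp_productDual (a b b' : I) :
    ((curriedTensor _).obj (K.X a)).map (L.d b b') ≫ wK.productDual wL a b' = 0 := by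
  have key : (LinearMap.mul' R R ∘ₗ TensorProduct.map (wK.dualFamily a) (wL.dualFamily b')) ∘ₗ
      ((L.d b b').app x).hom.lTensor ((K.X a).obj x) = 0 := by
    rw [LinearMap.comp_assoc, LinearMap.map_comp_lTensor, wL.dualFamily_comp_d,
      TensorProduct.map_zero_right, LinearMap.comp_zero]
  rw [productDual, comp_coinducedLift, curriedTensor_obj_map_app_hom]
  exact (congrArg coinducedLift key).trans coinducedLift_zero

variable [AddMonoid I] [c.TensorSigns] [(curriedTensor (D ⥤ ModuleCat.{u} R)).Additive]
  [∀ X : D ⥤ ModuleCat.{u} R, ((curriedTensor (D ⥤ ModuleCat.{u} R)).obj X).Additive]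

noncomputable def HomologyWitness.tensorUnit (x : D) :
    HomologyWitness (HomologicalComplex.tensorUnit (D ⥤ ModuleCat.{u} R) c) x 0 :=
  .single (𝟙_ _) (1 : R) LinearMap.id rfl

variable [HasTensor K L]

noncomputable def HomologyWitness.tensor : HomologyWitness (tensorObj K L) x (p + q) where
  cycle := (ιTensorObj K L p q (p + q) rfl).app x (wK.cycle ⊗ₜ wL.cycle)
  dual := dualOfCoinduced (mapBifunctorDesc fun a b _ => wK.productDual wL a b)
  d_cycle j := mapBifunctor_d_app_ι_app_eq_zero _
    (fun p' => by
      change (K.d p p').app x wK.cycle ⊗ₜ wL.cycle = 0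
      rw [wK.d_cycle, TensorProduct.zero_tmul])
    (fun q' => by
      change wK.cycle ⊗ₜ (L.d q q').app x wL.cycle = 0
      rw [wL.d_cycle, TensorProduct.tmul_zero]) rfl j
  dual_comp_d j := by
    rw [← dualOfCoinduced_comp, mapBifunctor_d_comp_desc_eq_zero _
      (wK.whiskerRight_d_comp_productDual wL) (wK.whiskerLeft_d_comp_productDual wL),
      dualOfCoinduced_zero]
  dual_cycle := by
    change dualOfCoinduced (ιTensorObj K L p q (p + q) rfl ≫
      mapBifunctorDesc fun a b _ => wK.productDual wL a b) (wK.cycle ⊗ₜ wL.cycle) = 1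
    rw [ι_mapBifunctorDesc, productDual, dualOfCoinduced_coinducedLift, wK.dualFamily_self,
      wL.dualFamily_self]
    show LinearMap.mul' R R (TensorProduct.map wK.dual wL.dual (wK.cycle ⊗ₜ wL.cycle)) = 1
    rw [TensorProduct.map_tmul, LinearMap.mul'_apply, wK.dual_cycle, wL.dual_cycle, mul_one]

end Tensor

end FunctorModuleComplex

open FunctorModuleComplex

theorem no_nilpotent_objects_in_derived_category
    (K : CochainComplex (C ⥤ ModuleCat k) ℤ)
    (n : ℕ)
    (hnil : ∀ i : ℤ, (tensorPow k C K n).ExactAt i) :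
    ∀ i : ℤ, K.ExactAt i := by
  intro i
  by_contra hi
  obtain ⟨x, ⟨w⟩⟩ := exists_homologyWitness_of_not_exactAt hi
  have hpow : ∀ m : ℕ, Nonempty (HomologyWitness (tensorPow k C K m) x (m • i)) := by
    intro m
    induction m with
    | zero => exact ⟨zero_nsmul i ▸ HomologyWitness.tensorUnit x⟩
    | succ m ih => exact ⟨succ_nsmul i m ▸ ih.some.tensor w⟩
  exact (hpow n).some.not_exactAt (hnil _)
end
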